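/- For Re(s) > 1, the Dirichlet series of d_k(n)² satisfies ∑_{n≥1} d_k(n)²/n^s = ζ(s)^{k²} · f(s), where f is holomorphic and bounded on any half-plane Re(s) ≥ 1/2 + ε. -/

import Mathlib

open scoped BigOperators

/-- The `k`-fold divisor function, as the `k`-th Dirichlet-convolution power of `ζ`. -/
def dk (k : ℕ) : ArithmeticFunction ℕ := (ArithmeticFunction.zeta) ^ k

/-!
Put `h = d_k² * μ^(k²)`, so that `d_k² = h * ζ^(k²)` and `f` is the Dirichlet series of `h`.
The function `h` is multiplicative with `h(p) = d_k(p)² - k² = 0`, so it vanishes off the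
powerful numbers, and `|h(n)| ≤ τ(n)^(k² + 2k + 1) ≪_ε n^ε`. Every powerful number is `a²b³`,
so `∑_{n powerful} n^(-θ)` converges for `θ > 1/2`. Hence the Dirichlet series of `h` converges
absolutely for `Re s > 1/2`, where it is holomorphic, and on `Re s ≥ 1/2 + ε` it is bounded
by its absolute series at `1/2 + ε`.
-/

open ArithmeticFunction Finset
open scoped ArithmeticFunction.zeta ArithmeticFunction.Moebius LSeries.notation

def Nat.Powerful (n : ℕ) : Prop := ∀ p : ℕ, p.Prime → p ∣ n → p ^ 2 ∣ n

theorem Nat.Powerful.exists_sq_mul_cube {n : ℕ} (hn : n.Powerful) :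
    ∃ a b : ℕ, a ^ 2 * b ^ 3 = n := by
  rcases Nat.eq_zero_or_pos n with rfl | hpos
  · exact ⟨0, 0, rfl⟩
  obtain ⟨q, s, -, -, rfl, hq⟩ := Nat.sq_mul_squarefree_of_pos hpos
  have hqs : q ∣ s := by
    rw [← Nat.prod_primeFactors_of_squarefree hq]
    refine prod_primes_dvd s (fun p hp => (Nat.prime_of_mem_primeFactors hp).prime) fun p hp => ?_
    have hpq := Nat.dvd_of_mem_primeFactors hp
    replace hp := Nat.prime_of_mem_primeFactors hp
    by_contra hps
    have hp2 : p ^ 2 ∣ q := ((hp.coprime_iff_not_dvd.mpr hps).pow 2 2).dvd_of_dvd_mul_left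
      (hn p hp (dvd_mul_of_dvd_right hpq _))
    exact hp.one_lt.ne' (Nat.isUnit_iff.mp (hq p (by simpa [sq] using hp2)))
  obtain ⟨t, rfl⟩ := hqs
  exact ⟨t, q, by ring⟩

theorem Nat.summable_indicator_powerful_rpow_neg {θ : ℝ} (hθ : 1 / 2 < θ) :
    Summable ({n : ℕ | n.Powerful}.indicator fun n => (n : ℝ) ^ (-θ)) := by
  rw [← summable_subtype_iff_indicator]
  choose a b hab using fun n : {n : ℕ // n.Powerful} => n.2.exists_sq_mul_cube
  have hinj : Function.Injective fun n => (a n, b n) := fun m n h => by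
    simp only [Prod.mk.injEq] at h
    exact Subtype.ext (by rw [← hab m, ← hab n, h.1, h.2])
  have hsum := (Summable.mul_of_nonneg (Real.summable_nat_rpow.mpr (by linarith : -(2 * θ) < -1))
    (Real.summable_nat_rpow.mpr (by linarith : -(3 * θ) < -1)) (fun _ => by positivity)
    (fun _ => by positivity)).comp_injective hinj
  refine hsum.congr fun n => ?_
  simp only [Function.comp_apply]
  rw [← hab n]
  push_cast
  rw [Real.mul_rpow (by positivity) (by positivity), ← Real.rpow_natCast_mul (by positivity),
    ← Real.rpow_natCast_mul (by positivity)]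
  norm_num

namespace ArithmeticFunction

variable {R : Type*}

theorem natCoe_pow [Semiring R] (f : ArithmeticFunction ℕ) (m : ℕ) :
    (↑(f ^ m) : ArithmeticFunction R) = (f : ArithmeticFunction R) ^ m := by
  induction m with
  | zero => simp
  | succ m ih => rw [pow_succ, natCoe_mul, ih, pow_succ]

theorem mul_apply_prime [Semiring R] (f g : ArithmeticFunction R) {p : ℕ} (hp : p.Prime) :
    (f * g) p = f 1 * g p + f p * g 1 := by
  rw [mul_apply, Nat.sum_divisorsAntidiagonal (fun a b => f a * g b), hp.sum_divisors,
    Nat.div_self hp.pos, Nat.div_one, add_comm]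

theorem pow_apply_one [Semiring R] (f : ArithmeticFunction R) (m : ℕ) : (f ^ m) 1 = f 1 ^ m := by
  induction m with
  | zero => simp
  | succ m ih => rw [pow_succ, mul_apply_one, ih, pow_succ]

theorem pow_apply_prime [Semiring R] {f : ArithmeticFunction R} (hf : f 1 = 1) (m : ℕ) {p : ℕ}
    (hp : p.Prime) : (f ^ m) p = m * f p := by
  induction m with
  | zero => simp [one_apply_ne hp.ne_one]
  | succ m ih =>
    rw [pow_succ, mul_apply_prime _ _ hp, ih, hf, pow_apply_one, hf, one_pow, one_mul, mul_one,
      Nat.cast_succ, add_mul, one_mul, add_comm]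

theorem norm_mul_apply_le_card_divisors_pow {f g : ArithmeticFunction ℂ} {a b : ℕ}
    (hf : ∀ n ≠ 0, ‖f n‖ ≤ (#n.divisors : ℝ) ^ a) (hg : ∀ n ≠ 0, ‖g n‖ ≤ (#n.divisors : ℝ) ^ b)
    {n : ℕ} (hn : n ≠ 0) : ‖(f * g) n‖ ≤ (#n.divisors : ℝ) ^ (a + b + 1) := by
  have mono {d : ℕ} (e : ℕ) (hd : d ∣ n) : (#d.divisors : ℝ) ^ e ≤ (#n.divisors : ℝ) ^ e := by
    gcongr
  rw [mul_apply, Nat.sum_divisorsAntidiagonal (fun x y => f x * g y)]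
  calc ‖∑ d ∈ n.divisors, f d * g (n / d)‖
      ≤ ∑ d ∈ n.divisors, (#n.divisors : ℝ) ^ (a + b) := by
        refine (norm_sum_le _ _).trans (sum_le_sum fun d hd => ?_)
        have hdn := Nat.dvd_of_mem_divisors hd
        rw [norm_mul, pow_add]
        gcongr
        · exact (hf d (ne_zero_of_dvd_ne_zero hn hdn)).trans (mono a hdn)
        · exact (hg _ (ne_zero_of_dvd_ne_zero hn (Nat.div_dvd_of_dvd hdn))).trans
            (mono b (Nat.div_dvd_of_dvd hdn))
    _ = (#n.divisors : ℝ) ^ (a + b + 1) := by rw [sum_const, nsmul_eq_mul, pow_succ, mul_comm]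

theorem norm_pow_apply_le_card_divisors_pow {f : ArithmeticFunction ℂ} (hf : ∀ n ≠ 0, ‖f n‖ ≤ 1)
    (m : ℕ) {n : ℕ} (hn : n ≠ 0) : ‖(f ^ m) n‖ ≤ (#n.divisors : ℝ) ^ m := by
  induction m generalizing n with
  | zero => by_cases h : n = 1 <;> simp [h]
  | succ m ih =>
    rw [pow_succ]
    exact norm_mul_apply_le_card_divisors_pow (fun n hn => ih hn) (b := 0)
      (fun n hn => by simpa using hf n hn) hn

theorem IsMultiplicative.apply_eq_zero_of_not_powerful [MonoidWithZero R]
    {f : ArithmeticFunction R} (hf : f.IsMultiplicative)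
    (hprime : ∀ p : ℕ, p.Prime → f p = 0) {n : ℕ} (hn : ¬ n.Powerful) : f n = 0 := by
  simp only [Nat.Powerful, not_forall] at hn
  obtain ⟨p, hp, ⟨m, rfl⟩, hp2⟩ := hn
  have hpm : ¬ p ∣ m := fun ⟨c, hc⟩ => hp2 ⟨c, by rw [hc]; ring⟩
  rw [hf.map_mul_of_coprime (hp.coprime_iff_not_dvd.mpr hpm), hprime p hp, zero_mul]

theorem LSeriesHasSum_zeta_pow (m : ℕ) {s : ℂ} (hs : 1 < s.re) :
    LSeriesHasSum ↗((ζ : ArithmeticFunction ℂ) ^ m) s (riemannZeta s ^ m) := by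
  induction m with
  | zero =>
    rw [pow_zero, pow_zero, one_eq_delta, LSeriesHasSum, funext (LSeries.term_delta s)]
    exact hasSum_ite_eq 1 1
  | succ m ih =>
    rw [pow_succ, pow_succ]
    exact LSeriesHasSum_mul ih (by simpa [natCoe_apply] using LSeriesHasSum_zeta hs)

end ArithmeticFunction

theorem add_one_le_mul_pow {r : ℝ} (hr : 1 < r) (a : ℕ) :
    (a + 1 : ℝ) ≤ (1 + (r - 1)⁻¹) * r ^ a := by
  have hc : 0 < r - 1 := sub_pos.mpr hr
  have bernoulli := one_add_mul_le_pow (a := r - 1) (by linarith) a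
  rw [add_sub_cancel] at bernoulli
  calc (a + 1 : ℝ) ≤ (1 + (r - 1)⁻¹) * (1 + a * (r - 1)) := by
        have : (r - 1)⁻¹ * (a * (r - 1)) = a := by field_simp
        nlinarith [inv_pos.mpr hc]
    _ ≤ (1 + (r - 1)⁻¹) * r ^ a := by gcongr

theorem Nat.exists_card_divisors_le_mul_rpow {ε : ℝ} (hε : 0 < ε) :
    ∃ C, ∀ n : ℕ, n ≠ 0 → (#n.divisors : ℝ) ≤ C * n ^ ε := by
  -- A prime power `p^e ∥ n` contributes `(e + 1) / p^(eε)`: at most `1` once `p^ε ≥ 2`, i.e. for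
  -- `p ≥ P`, and at most `C₀` for each of the fewer than `P` remaining primes.
  set C₀ := 1 + ((2 : ℝ) ^ ε - 1)⁻¹
  set P := ⌈(2 : ℝ) ^ ε⁻¹⌉₊
  have hC₀ : 1 ≤ C₀ := le_add_of_nonneg_right (inv_nonneg.mpr (by
    linarith [Real.one_le_rpow (by norm_num : (1 : ℝ) ≤ 2) hε.le]))
  have local_bound (p : ℕ) (hp : p.Prime) (e : ℕ) :
      (e + 1 : ℝ) ≤ (if p < P then C₀ else 1) * ((p : ℝ) ^ e) ^ ε := by
    rw [← Real.rpow_pow_comm (Nat.cast_nonneg p)]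
    split_ifs with h
    · calc (e + 1 : ℝ) ≤ C₀ * ((2 : ℝ) ^ ε) ^ e :=
            add_one_le_mul_pow (Real.one_lt_rpow (by norm_num) hε) e
        _ ≤ C₀ * ((p : ℝ) ^ ε) ^ e := by gcongr; exact_mod_cast hp.two_le
    · have hp2 : 2 ≤ (p : ℝ) ^ ε := by
        calc (2 : ℝ) = ((2 : ℝ) ^ ε⁻¹) ^ ε := by
              rw [← Real.rpow_mul (by norm_num), inv_mul_cancel₀ hε.ne', Real.rpow_one]
          _ ≤ (p : ℝ) ^ ε := by
              gcongr
              exact (Nat.le_ceil _).trans (by exact_mod_cast not_lt.mp h)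
      calc (e + 1 : ℝ) ≤ 2 ^ e := by exact_mod_cast Nat.lt_two_pow_self
        _ ≤ ((p : ℝ) ^ ε) ^ e := by gcongr
        _ = 1 * ((p : ℝ) ^ ε) ^ e := (one_mul _).symm
  refine ⟨C₀ ^ P, fun n hn => ?_⟩
  calc (#n.divisors : ℝ) = ∏ p ∈ n.primeFactors, ((n.factorization p : ℝ) + 1) := by
        rw [Nat.card_divisors hn]; push_cast; rfl
    _ ≤ ∏ p ∈ n.primeFactors, (if p < P then C₀ else 1) * ((p : ℝ) ^ n.factorization p) ^ ε :=
        prod_le_prod (fun _ _ => by positivity)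
          fun p hp => local_bound p (Nat.prime_of_mem_primeFactors hp) _
    _ = C₀ ^ #{p ∈ n.primeFactors | p < P} * (n : ℝ) ^ ε := by
        rw [prod_mul_distrib, prod_ite, prod_const_one, mul_one, prod_const,
          Real.finsetProd_rpow _ _ (fun _ _ => by positivity)]
        congr
        exact_mod_cast (Nat.prod_primeFactors_pow_factorization hn).symm
    _ ≤ C₀ ^ P * (n : ℝ) ^ ε := by
        gcongr
        refine (card_le_card fun p hp => ?_).trans (card_range P).le
        exact mem_range.mpr (mem_filter.mp hp).2

theorem Nat.exists_card_divisors_pow_le_mul_rpow (M : ℕ) {ε : ℝ} (hε : 0 < ε) :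
    ∃ C, ∀ n : ℕ, n ≠ 0 → (#n.divisors : ℝ) ^ M ≤ C * n ^ ε := by
  obtain ⟨C, hC⟩ := Nat.exists_card_divisors_le_mul_rpow (ε := ε / (M + 1)) (by positivity)
  have hC₀ : 0 ≤ C := zero_le_one.trans (by simpa using hC 1 one_ne_zero)
  refine ⟨C ^ M, fun n hn => ?_⟩
  have hn1 : (1 : ℝ) ≤ n := by exact_mod_cast Nat.one_le_iff_ne_zero.mpr hn
  calc (#n.divisors : ℝ) ^ M ≤ (C * (n : ℝ) ^ (ε / (M + 1))) ^ M := by gcongr; exact hC n hn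
    _ = C ^ M * (n : ℝ) ^ (ε / (M + 1) * M) := by
        rw [mul_pow, Real.rpow_mul_natCast (Nat.cast_nonneg n)]
    _ ≤ C ^ M * (n : ℝ) ^ ε := by
        gcongr
        rw [div_mul_eq_mul_div, div_le_iff₀ (by positivity)]
        nlinarith

theorem LSeries.norm_le_tsum_norm_term {f : ℕ → ℂ} {s₀ s : ℂ} (h : LSeriesSummable f s₀)
    (hs : s₀.re ≤ s.re) : ‖LSeries f s‖ ≤ ∑' n, ‖term f s₀ n‖ :=
  (norm_tsum_le_tsum_norm (h.of_re_le_re hs).norm).trans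
    (Summable.tsum_le_tsum (norm_term_le_of_re_le_re f hs) (h.of_re_le_re hs).norm h.norm)

theorem LSeriesSummable_of_powerful_support {f : ℕ → ℂ} (hsupp : ∀ n, ¬ n.Powerful → f n = 0)
    (hbound : ∀ ε : ℝ, 0 < ε → ∃ C, ∀ n : ℕ, n ≠ 0 → ‖f n‖ ≤ C * n ^ ε) {s : ℂ}
    (hs : 1 / 2 < s.re) : LSeriesSummable f s := by
  obtain ⟨θ, hθ, hθs⟩ := exists_between hs
  obtain ⟨C, hC⟩ := hbound (s.re - θ) (by linarith)
  refine Summable.of_norm_bounded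
    ((Nat.summable_indicator_powerful_rpow_neg (θ := θ) (by linarith)).mul_left C) fun n => ?_
  rcases eq_or_ne n 0 with rfl | hn
  · rw [Set.indicator_of_mem (show (0 : ℕ) ∈ {n : ℕ | n.Powerful} from fun _ _ _ => dvd_zero _)]
    simp [Real.zero_rpow (by linarith : -θ ≠ 0)]
  by_cases hP : n.Powerful
  · have hn0 : (0 : ℝ) < n := by positivity
    rw [LSeries.norm_term_eq, if_neg hn, Set.indicator_of_mem hP, div_le_iff₀ (by positivity),
      mul_assoc, ← Real.rpow_add hn0, neg_add_eq_sub]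
    exact hC n hn
  · simp [LSeries.term, hsupp n hP, Set.indicator_of_notMem (s := {n : ℕ | n.Powerful}) hP]

noncomputable def dkSqMulMoebiusPow (k : ℕ) : ArithmeticFunction ℂ :=
  (dk k : ArithmeticFunction ℂ).pmul (dk k) * (μ : ArithmeticFunction ℂ) ^ (k ^ 2)

theorem natCoe_dk (k : ℕ) : (dk k : ArithmeticFunction ℂ) = (ζ : ArithmeticFunction ℂ) ^ k :=
  natCoe_pow _ _

theorem isMultiplicative_dkSqMulMoebiusPow (k : ℕ) : (dkSqMulMoebiusPow k).IsMultiplicative :=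
  have hdk := (isMultiplicative_zeta.pow (k := k)).natCast (R := ℂ)
  (hdk.pmul hdk).mul (isMultiplicative_moebius.intCast.pow)

theorem dkSqMulMoebiusPow_apply_prime (k : ℕ) {p : ℕ} (hp : p.Prime) :
    dkSqMulMoebiusPow k p = 0 := by
  have hζ : (ζ : ArithmeticFunction ℂ) 1 = 1 := by simp [natCoe_apply]
  have hμ : (μ : ArithmeticFunction ℂ) 1 = 1 := by simp [intCoe_apply]
  rw [dkSqMulMoebiusPow, mul_apply_prime _ _ hp, pmul_apply, pmul_apply, natCoe_dk, pow_apply_one,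
    pow_apply_one, pow_apply_prime hζ _ hp, pow_apply_prime hμ _ hp, hζ, hμ]
  simp [natCoe_apply, intCoe_apply, moebius_apply_prime hp, hp.ne_zero]
  ring

theorem norm_dkSqMulMoebiusPow_le (k : ℕ) {n : ℕ} (hn : n ≠ 0) :
    ‖dkSqMulMoebiusPow k n‖ ≤ (#n.divisors : ℝ) ^ (2 * k + k ^ 2 + 1) := by
  have hζ (n : ℕ) (hn : n ≠ 0) : ‖(ζ : ArithmeticFunction ℂ) n‖ ≤ 1 := by simp [natCoe_apply, hn]
  have hμ (n : ℕ) (_ : n ≠ 0) : ‖(μ : ArithmeticFunction ℂ) n‖ ≤ 1 := by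
    rw [intCoe_apply, Complex.norm_intCast]
    exact_mod_cast abs_moebius_le_one
  have hsq (n : ℕ) (hn : n ≠ 0) :
      ‖(dk k : ArithmeticFunction ℂ).pmul (dk k) n‖ ≤ (#n.divisors : ℝ) ^ (2 * k) := by
    have hdk := norm_pow_apply_le_card_divisors_pow hζ k hn
    rw [pmul_apply, norm_mul, natCoe_dk, mul_comm 2 k, pow_mul, sq]
    exact mul_le_mul hdk hdk (norm_nonneg _) (by positivity)
  exact norm_mul_apply_le_card_divisors_pow hsq
    (fun n hn => norm_pow_apply_le_card_divisors_pow hμ (k ^ 2) hn) hn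

theorem dkSqMulMoebiusPow_mul_zeta_pow (k : ℕ) :
    dkSqMulMoebiusPow k * (ζ : ArithmeticFunction ℂ) ^ (k ^ 2) =
      (dk k : ArithmeticFunction ℂ).pmul (dk k) := by
  rw [dkSqMulMoebiusPow, mul_assoc, ← mul_pow, coe_moebius_mul_coe_zeta, one_pow, mul_one]

theorem LSeriesSummable_dkSqMulMoebiusPow (k : ℕ) {s : ℂ} (hs : 1 / 2 < s.re) :
    LSeriesSummable ↗(dkSqMulMoebiusPow k) s :=
  LSeriesSummable_of_powerful_support
    (fun _ hn => (isMultiplicative_dkSqMulMoebiusPow k).apply_eq_zero_of_not_powerful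
      (fun _ hp => dkSqMulMoebiusPow_apply_prime k hp) hn)
    (fun _ hε => (Nat.exists_card_divisors_pow_le_mul_rpow _ hε).imp fun _ hC n hn =>
      (norm_dkSqMulMoebiusPow_le k hn).trans (hC n hn)) hs

theorem stmt7_general (k : ℕ) :
    ∃ f : ℂ → ℂ,
      DifferentiableOn ℂ f {s : ℂ | 1 / 2 < s.re} ∧
      (∀ ε : ℝ, 0 < ε → ∃ C : ℝ, ∀ s : ℂ, 1 / 2 + ε ≤ s.re → ‖f s‖ ≤ C) ∧
      ∀ s : ℂ, 1 < s.re →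
        ∑' n : ℕ, ((dk k n : ℂ)) ^ 2 / (n : ℂ) ^ s = riemannZeta s ^ (k ^ 2) * f s := by
  have hsum {s : ℂ} (hs : 1 / 2 < s.re) := LSeriesSummable_dkSqMulMoebiusPow k hs
  refine ⟨LSeries ↗(dkSqMulMoebiusPow k), ?_, fun ε hε => ?_, fun s hs => ?_⟩
  · have habs := LSeries.abscissaOfAbsConv_le_of_forall_lt_LSeriesSummable
      (f := ↗(dkSqMulMoebiusPow k)) (x := 1 / 2) fun y hy => hsum (by simpa using hy)
    exact (LSeries_differentiableOn _).mono fun s hs => habs.trans_lt (by exact_mod_cast hs)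
  · exact ⟨_, fun s hs => LSeries.norm_le_tsum_norm_term (s₀ := (1 / 2 + ε : ℝ))
      (hsum (by simpa using hε)) (by simpa using hs)⟩
  · have hLHS : ∑' n : ℕ, (dk k n : ℂ) ^ 2 / (n : ℂ) ^ s =
        LSeries ↗((dk k : ArithmeticFunction ℂ).pmul (dk k)) s := by
      refine tsum_congr fun n => ?_
      rcases eq_or_ne n 0 with rfl | hn
      · simp
      · simp [LSeries.term_of_ne_zero hn, pmul_apply, natCoe_apply, sq]
    rw [hLHS, ← dkSqMulMoebiusPow_mul_zeta_pow, mul_comm (riemannZeta s ^ _),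
      (LSeriesHasSum_mul (hsum (s := s) (by linarith)).LSeriesHasSum
        (LSeriesHasSum_zeta_pow _ hs)).LSeries_eq]

theorem stmt7 (k : ℕ) (hk : 1 ≤ k) :
    ∃ f : ℂ → ℂ,
      DifferentiableOn ℂ f {s : ℂ | 1 / 2 < s.re} ∧
      (∀ ε : ℝ, 0 < ε → ∃ C : ℝ, ∀ s : ℂ, 1 / 2 + ε ≤ s.re → ‖f s‖ ≤ C) ∧
      ∀ s : ℂ, 1 < s.re →
        ∑' n : ℕ, ((dk k n : ℂ)) ^ 2 / (n : ℂ) ^ s = riemannZeta s ^ (k ^ 2) * f s :=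
  stmt7_general k
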